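/- arXiv:2107.08390 — 4 statements merged into one kernel-verified Lean document; each statement's English description precedes it below -/
import Mathlib

section
/- Validity of the monotonic Benders cut: let f : ℤ₊ⁿ → ℝ₊ be non-increasing with respect to the componentwise order, let m ≤ M be integer bounds, and let ȳ ∈ {m,…,M}ⁿ. For y ∈ {m,…,M}ⁿ define z_{ξ,j}(y) = 1 if y_j = ξ and 0 otherwise. Then for every y ∈ {m,…,M}ⁿ, f(y) ≥ f(ȳ) · (1 − ∑_{j=1}^{n} ∑_{ξ=ȳ_j+1}^{M} z_{ξ,j}(y)). -/
open Finset

theorem sum_Icc_succ_ite_eq {R : Type*} [AddCommMonoidWithOne R] {a M : ℤ} (b : ℤ)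
    (ha : a ≤ M) :
    ∑ ξ ∈ Icc (b + 1) M, (if a = ξ then (1 : R) else 0) = if b < a then 1 else 0 := by
  rw [sum_ite_eq]
  exact if_congr (by rw [mem_Icc]; omega) rfl rfl

/-- The cut is trivially valid once some coordinate exceeds `ybar` (its right side is `≤ 0`),
and otherwise `y ≤ ybar` and it is monotonicity. -/
theorem antitone_mul_one_sub_card_lt_le {ι α : Type*} [Fintype ι] [LinearOrder α]
    {f : (ι → α) → ℝ} (hf : Antitone f) {y ybar : ι → α} (hy : 0 ≤ f y) (hybar : 0 ≤ f ybar) :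
    f ybar * (1 - #{j | ybar j < y j}) ≤ f y := by
  rcases Nat.eq_zero_or_pos #{j | ybar j < y j} with hzero | hpos
  · have hle : y ≤ ybar := fun j => not_lt.mp (filter_eq_empty_iff.mp (card_eq_zero.mp hzero)
      (mem_univ j))
    simpa [hzero] using hf hle
  · have hcard : (1 : ℝ) ≤ #{j | ybar j < y j} := by exact_mod_cast hpos
    exact (mul_nonpos_of_nonneg_of_nonpos hybar (by linarith)).trans hy

theorem monotonic_cut_valid_general (n : ℕ) (m M : ℤ)
    (f : (Fin n → ℤ) → ℝ)
    (hf0 : ∀ y, 0 ≤ f y)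
    (hf : ∀ y y' : Fin n → ℤ, (∀ j, y j ≤ y' j) → f y' ≤ f y)
    (ybar : Fin n → ℤ)
    (y : Fin n → ℤ) (hy : ∀ j, m ≤ y j ∧ y j ≤ M) :
    f y ≥ f ybar *
      (1 - ∑ j : Fin n, ∑ ξ ∈ Finset.Icc (ybar j + 1) M,
        (if y j = ξ then (1 : ℝ) else 0)) := by
  simp only [sum_Icc_succ_ite_eq _ (hy _).2, sum_boole]
  exact antitone_mul_one_sub_card_lt_le (fun _ _ h => hf _ _ h) (hf0 y) (hf0 ybar)

/-- Validity of the monotonic Benders cut. -/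
theorem monotonic_cut_valid (n : ℕ) (m M : ℤ) (hm0 : 0 ≤ m) (hmM : m ≤ M)
    (f : (Fin n → ℤ) → ℝ)
    (hf0 : ∀ y, 0 ≤ f y)
    (hf : ∀ y y' : Fin n → ℤ, (∀ j, y j ≤ y' j) → f y' ≤ f y)
    (ybar : Fin n → ℤ) (hybar : ∀ j, m ≤ ybar j ∧ ybar j ≤ M)
    (y : Fin n → ℤ) (hy : ∀ j, m ≤ y j ∧ y j ≤ M) :
    f y ≥ f ybar *
      (1 - ∑ j : Fin n, ∑ ξ ∈ Finset.Icc (ybar j + 1) M,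
        (if y j = ξ then (1 : ℝ) else 0)) :=
  monotonic_cut_valid_general n m M f hf0 hf ybar y hy
end

section
/- Validity of the local Benders cut: let f : ℤ₊ⁿ → ℝ₊ be non-increasing, m ≤ M integers, ȳ ∈ {m,…,M}ⁿ, and L ⊆ {1,…,n}. Define Δ(L, ȳ) ∈ ℤ₊ⁿ by Δ(L, ȳ)_j = ȳ_j if j ∈ L and Δ(L, ȳ)_j = M otherwise. If f(Δ(L, ȳ)) = f(ȳ), then for all y ∈ {m,…,M}ⁿ, f(y) ≥ f(ȳ) · (1 − ∑_{j ∈ L} ∑_{ξ=ȳ_j+1}^{M} z_{ξ,j}(y)), where z_{ξ,j}(y) is the indicator that y_j = ξ. -/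
/-! Inside the box `y ≤ M` the cut's double sum counts the coordinates `j ∈ L` with
`ybar j < y j`. If there are none, `y` lies below `Δ(L, ybar)`, so monotonicity gives
`f y ≥ f (Δ(L, ybar)) = f ybar`; otherwise the right-hand side is `≤ 0 ≤ f y`. -/

open Finset

lemma sum_indicator_Icc_eq_card {ι : Type*} (L : Finset ι) (a y : ι → ℤ) (M : ℤ) :
    ∑ j ∈ L, ∑ ξ ∈ Icc (a j + 1) M, (if y j = ξ then (1 : ℝ) else 0)
      = #{j ∈ L | a j < y j ∧ y j ≤ M} := by
  simp only [sum_ite_eq, mem_Icc, Int.add_one_le_iff]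
  rw [sum_boole]

lemma le_ite_of_card_filter_eq_zero {ι : Type*} [DecidableEq ι] (L : Finset ι)
    (a y : ι → ℤ) (M : ℤ)
    (hyM : ∀ j, y j ≤ M) (h : #{j ∈ L | a j < y j ∧ y j ≤ M} = 0) :
    y ≤ fun j => if j ∈ L then a j else M := by
  intro j
  dsimp only
  split_ifs with hj
  · have hnot := filter_eq_empty_iff.1 (card_eq_zero.1 h) hj
    exact not_lt.1 fun hlt => hnot ⟨hlt, hyM j⟩
  · exact hyM j

theorem local_cut_valid_general (n : ℕ) (m M : ℤ)
    (f : (Fin n → ℤ) → ℝ)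
    (hf0 : ∀ y, 0 ≤ f y)
    (hf : ∀ y y' : Fin n → ℤ, (∀ j, y j ≤ y' j) → f y' ≤ f y)
    (ybar : Fin n → ℤ)
    (L : Finset (Fin n))
    (hL : f (fun j => if j ∈ L then ybar j else M) = f ybar)
    (y : Fin n → ℤ) (hy : ∀ j, m ≤ y j ∧ y j ≤ M) :
    f y ≥ f ybar *
      (1 - ∑ j ∈ L, ∑ ξ ∈ Finset.Icc (ybar j + 1) M,
        (if y j = ξ then (1 : ℝ) else 0)) := by
  have hanti : Antitone f := fun y y' h => hf y y' h
  rw [sum_indicator_Icc_eq_card, ge_iff_le]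
  rcases Nat.eq_zero_or_pos #{j ∈ L | ybar j < y j ∧ y j ≤ M} with hcut | hcut
  · rw [hcut, Nat.cast_zero, sub_zero, mul_one, ← hL]
    exact hanti (le_ite_of_card_filter_eq_zero L ybar y M (fun j => (hy j).2) hcut)
  · have hone : (1 : ℝ) ≤ #{j ∈ L | ybar j < y j ∧ y j ≤ M} := by exact_mod_cast hcut
    nlinarith [hf0 y, hf0 ybar]

/-- Validity of the local Benders cut. -/
theorem local_cut_valid (n : ℕ) (m M : ℤ) (hm0 : 0 ≤ m) (hmM : m ≤ M)
    (f : (Fin n → ℤ) → ℝ)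
    (hf0 : ∀ y, 0 ≤ f y)
    (hf : ∀ y y' : Fin n → ℤ, (∀ j, y j ≤ y' j) → f y' ≤ f y)
    (ybar : Fin n → ℤ) (hybar : ∀ j, m ≤ ybar j ∧ ybar j ≤ M)
    (L : Finset (Fin n))
    (hL : f (fun j => if j ∈ L then ybar j else M) = f ybar)
    (y : Fin n → ℤ) (hy : ∀ j, m ≤ y j ∧ y j ≤ M) :
    f y ≥ f ybar *
      (1 - ∑ j ∈ L, ∑ ξ ∈ Finset.Icc (ybar j + 1) M,
        (if y j = ξ then (1 : ℝ) else 0)) :=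
  local_cut_valid_general n m M f hf0 hf ybar L hL y hy
end

section
/- Validity of the strengthened Benders cut: let f : ℤ₊ⁿ → ℝ₊ be non-increasing, fix an index p ∈ {1,…,n}, bounds m ≤ M, ȳ ∈ {m,…,M}ⁿ, and L ⊆ {1,…,n} with p ∈ L such that f(Δ(L, ȳ)) = f(ȳ). For ξ ∈ {m,…,M} define I(ξ) = f(v^ξ) where v^ξ_p = ξ and v^ξ_j = M for j ≠ p, and define Base = I(ȳ_p). Then for every y ∈ {m,…,M}ⁿ: f(y) ≥ f(ȳ) − ∑_{ξ=ȳ_p+1}^{M} (f(ȳ) − I(ξ)) z_{ξ,p}(y) − (f(ȳ) − Base) ∑_{j ∈ L∖{p}} ∑_{ξ=ȳ_j+1}^{M} z_{ξ,j}(y). -/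
/-!
The first sum collapses to `f ybar - I (y p)` when `y p > ybar p` and to `0` otherwise, and the
double sum counts the `j ∈ L \ {p}` with `y j > ybar j`. If `y p > ybar p`, the cut is at most
`I (y p) ≤ f y`, as `y ≤ v^{y p}`. Otherwise, if some `j ∈ L \ {p}` has `y j > ybar j`, the count
is at least one and the cut is at most `Base ≤ f y`, as `y ≤ v^{ybar p}`. In the remaining case
`y ≤ Δ(L, ybar)`, so `f y ≥ f (Δ(L, ybar)) = f ybar`, which is the cut.
-/

namespace Antitone

variable {ι α β : Type*} [DecidableEq ι] [Preorder α] [Preorder β] {f : (ι → α) → β}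
  {y : ι → α} {M : α}

theorem apply_ite_eq_le (hf : Antitone f) (hyM : ∀ j, y j ≤ M) {p : ι} {ξ : α}
    (hξ : y p ≤ ξ) : f (fun j => if j = p then ξ else M) ≤ f y :=
  hf fun j => by
    by_cases h : j = p
    · subst h; simpa using hξ
    · simpa [h] using hyM j

theorem apply_ite_mem_le (hf : Antitone f) (hyM : ∀ j, y j ≤ M) {ybar : ι → α} {L : Finset ι}
    (hL : ∀ j ∈ L, y j ≤ ybar j) : f (fun j => if j ∈ L then ybar j else M) ≤ f y :=
  hf fun j => by
    by_cases h : j ∈ L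
    · simpa [h] using hL j h
    · simpa [h] using hyM j

end Antitone

theorem Int.mem_Icc_add_one_iff_lt {a b M : ℤ} (ha : a ≤ M) :
    a ∈ Finset.Icc (b + 1) M ↔ b < a := by
  simp [ha]

theorem strengthened_cut_valid_general (n : ℕ) (m M : ℤ)
    (f : (Fin n → ℤ) → ℝ)
    (hf : ∀ y y' : Fin n → ℤ, (∀ j, y j ≤ y' j) → f y' ≤ f y)
    (p : Fin n)
    (ybar : Fin n → ℤ) (hybar : ∀ j, m ≤ ybar j ∧ ybar j ≤ M)
    (L : Finset (Fin n))
    (hL : f (fun j => if j ∈ L then ybar j else M) = f ybar)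
    (I : ℤ → ℝ) (hI : ∀ ξ, I ξ = f (fun j => if j = p then ξ else M))
    (y : Fin n → ℤ) (hy : ∀ j, m ≤ y j ∧ y j ≤ M) :
    f y ≥ f ybar
      - ∑ ξ ∈ Finset.Icc (ybar p + 1) M,
          (f ybar - I ξ) * (if y p = ξ then (1 : ℝ) else 0)
      - (f ybar - I (ybar p)) *
          ∑ j ∈ L.erase p, ∑ ξ ∈ Finset.Icc (ybar j + 1) M,
            (if y j = ξ then (1 : ℝ) else 0) := by
  have hanti : Antitone f := fun y y' h => hf y y' h
  have hyM j : y j ≤ M := (hy j).2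
  have hgap : 0 ≤ f ybar - I (ybar p) :=
    sub_nonneg.2 (hI _ ▸ hanti.apply_ite_eq_le (fun j => (hybar j).2) le_rfl)
  simp only [mul_ite, mul_one, mul_zero, Finset.sum_ite_eq, Finset.sum_boole,
    fun j => Int.mem_Icc_add_one_iff_lt (b := ybar j) (hyM j)]
  set raised := (L.erase p).filter fun j => ybar j < y j
  split_ifs with hp
  · have hIy : I (y p) ≤ f y := hI (y p) ▸ hanti.apply_ite_eq_le hyM le_rfl
    linarith [mul_nonneg hgap (Nat.cast_nonneg (α := ℝ) raised.card)]
  · replace hp := not_lt.1 hp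
    rcases raised.eq_empty_or_nonempty with hempty | hne
    · have hle : ∀ j ∈ L, y j ≤ ybar j := fun j hj => by
        by_cases hjp : j = p
        · exact hjp ▸ hp
        · exact not_lt.1 (Finset.filter_eq_empty_iff.1 hempty (Finset.mem_erase.2 ⟨hjp, hj⟩))
      have hfy : f ybar ≤ f y := hL ▸ hanti.apply_ite_mem_le hyM hle
      rw [hempty, Finset.card_empty, Nat.cast_zero]
      linarith
    · have hone : (1 : ℝ) ≤ raised.card := by exact_mod_cast hne.card_pos
      have hbase : I (ybar p) ≤ f y := hI _ ▸ hanti.apply_ite_eq_le hyM hp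
      linarith [le_mul_of_one_le_right hgap hone]

/-- Validity of the strengthened Benders cut. -/
theorem strengthened_cut_valid (n : ℕ) (m M : ℤ) (hm0 : 0 ≤ m) (hmM : m ≤ M)
    (f : (Fin n → ℤ) → ℝ)
    (hf0 : ∀ y, 0 ≤ f y)
    (hf : ∀ y y' : Fin n → ℤ, (∀ j, y j ≤ y' j) → f y' ≤ f y)
    (p : Fin n)
    (ybar : Fin n → ℤ) (hybar : ∀ j, m ≤ ybar j ∧ ybar j ≤ M)
    (L : Finset (Fin n)) (hpL : p ∈ L)
    (hL : f (fun j => if j ∈ L then ybar j else M) = f ybar)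
    (I : ℤ → ℝ) (hI : ∀ ξ, I ξ = f (fun j => if j = p then ξ else M))
    (y : Fin n → ℤ) (hy : ∀ j, m ≤ y j ∧ y j ≤ M) :
    f y ≥ f ybar
      - ∑ ξ ∈ Finset.Icc (ybar p + 1) M,
          (f ybar - I ξ) * (if y p = ξ then (1 : ℝ) else 0)
      - (f ybar - I (ybar p)) *
          ∑ j ∈ L.erase p, ∑ ξ ∈ Finset.Icc (ybar j + 1) M,
            (if y j = ξ then (1 : ℝ) else 0) :=
  strengthened_cut_valid_general n m M f hf p ybar hybar L hL I hI y hy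
end

section
/- Strengthened two-dimensional initial cut validity: let f : ℤ₊ⁿ → ℝ₊ be non-increasing, p ≠ l indices, and W(ξ₁, ξ₂) = f(w) with w_p = ξ₁, w_l = ξ₂, w_j = M otherwise. Fix ξ₁ ∈ {m,…,M}. Then for every y ∈ {m,…,M}ⁿ: f(y) ≥ ∑_{ξ₂=m}^{M} W(ξ₁, ξ₂) z_{ξ₂,l}(y) − ∑_{ξ'=ξ₁+1}^{M} [ max_{ξ₂ ∈ {m,…,M}} ( W(ξ₁, ξ₂) − W(ξ', ξ₂) ) ] z_{ξ',p}(y). -/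
/-!
For fixed `y` each indicator sum has at most one nonzero term, so the right-hand side is
`W(ξ₁, y_l)` minus, when `y_p > ξ₁`, the penalty `max_{ξ₂} (W(ξ₁, ξ₂) - W(y_p, ξ₂))`.
Since `y` lies below the corner point `w` with `w_p = max(ξ₁, y_p)`, `w_l = y_l`, monotonicity
gives `W(max(ξ₁, y_p), y_l) ≤ f(y)`; when `y_p > ξ₁` the penalty at `ξ₂ = y_l` turns
`W(y_p, y_l)` back into `W(ξ₁, y_l)`.
-/

theorem Finset.sum_mul_ite_eq_of_mem {α β : Type*} [DecidableEq α] [NonAssocSemiring β]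
    {s : Finset α} {a : α} (g : α → β) (ha : a ∈ s) :
    ∑ x ∈ s, g x * (if a = x then 1 else 0) = g a := by
  simp [mul_ite, ha]

theorem le_update_corner {ι α : Type*} [DecidableEq ι] [Preorder α] {y : ι → α} {M a : α}
    (p l : ι) (hyM : ∀ j, y j ≤ M) (hya : y p ≤ a) :
    y ≤ fun j => if j = p then a else if j = l then y l else M := by
  intro j
  dsimp only
  split_ifs with hp hl
  · exact hp ▸ hya
  · exact hl ▸ le_rfl
  · exact hyM j

theorem initial_cut_2d_strong_valid_general (n : ℕ) (m M : ℤ)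
    (hIcc : (Finset.Icc m M).Nonempty)
    (f : (Fin n → ℤ) → ℝ)
    (hf : ∀ y y' : Fin n → ℤ, (∀ j, y j ≤ y' j) → f y' ≤ f y)
    (p l : Fin n)
    (W : ℤ → ℤ → ℝ)
    (hW : ∀ ξ₁ ξ₂, W ξ₁ ξ₂ =
      f (fun j => if j = p then ξ₁ else if j = l then ξ₂ else M))
    (ξ₁ : ℤ)
    (y : Fin n → ℤ) (hy : ∀ j, m ≤ y j ∧ y j ≤ M) :
    f y ≥ (∑ ξ₂ ∈ Finset.Icc m M, W ξ₁ ξ₂ * (if y l = ξ₂ then (1 : ℝ) else 0))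
      - ∑ ξ' ∈ Finset.Icc (ξ₁ + 1) M,
          ((Finset.Icc m M).sup' hIcc (fun ξ₂ => W ξ₁ ξ₂ - W ξ' ξ₂)) *
            (if y p = ξ' then (1 : ℝ) else 0) := by
  have hyl : y l ∈ Finset.Icc m M := Finset.mem_Icc.mpr (hy l)
  have hW_le {a : ℤ} (ha : y p ≤ a) : W a (y l) ≤ f y :=
    hW a (y l) ▸ hf _ _ (le_update_corner p l (fun j => (hy j).2) ha)
  rw [Finset.sum_mul_ite_eq_of_mem _ hyl]
  by_cases hpξ : y p ≤ ξ₁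
  · have hp : y p ∉ Finset.Icc (ξ₁ + 1) M := by rw [Finset.mem_Icc]; omega
    simpa [mul_ite, hp] using hW_le hpξ
  · have hp : y p ∈ Finset.Icc (ξ₁ + 1) M := Finset.mem_Icc.mpr ⟨by omega, (hy p).2⟩
    rw [Finset.sum_mul_ite_eq_of_mem _ hp]
    have hpenalty := Finset.le_sup' (fun ξ₂ => W ξ₁ ξ₂ - W (y p) ξ₂) hyl
    linarith [hW_le le_rfl]

/-- Strengthened two-dimensional initial cut validity. -/
theorem initial_cut_2d_strong_valid (n : ℕ) (m M : ℤ) (hm0 : 0 ≤ m) (hmM : m ≤ M)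
    (hIcc : (Finset.Icc m M).Nonempty)
    (f : (Fin n → ℤ) → ℝ)
    (hf0 : ∀ y, 0 ≤ f y)
    (hf : ∀ y y' : Fin n → ℤ, (∀ j, y j ≤ y' j) → f y' ≤ f y)
    (p l : Fin n) (hpl : p ≠ l)
    (W : ℤ → ℤ → ℝ)
    (hW : ∀ ξ₁ ξ₂, W ξ₁ ξ₂ =
      f (fun j => if j = p then ξ₁ else if j = l then ξ₂ else M))
    (ξ₁ : ℤ) (hξ₁ : ξ₁ ∈ Finset.Icc m M)
    (y : Fin n → ℤ) (hy : ∀ j, m ≤ y j ∧ y j ≤ M) :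
    f y ≥ (∑ ξ₂ ∈ Finset.Icc m M, W ξ₁ ξ₂ * (if y l = ξ₂ then (1 : ℝ) else 0))
      - ∑ ξ' ∈ Finset.Icc (ξ₁ + 1) M,
          ((Finset.Icc m M).sup' hIcc (fun ξ₂ => W ξ₁ ξ₂ - W ξ' ξ₂)) *
            (if y p = ξ' then (1 : ℝ) else 0) :=
  initial_cut_2d_strong_valid_general n m M hIcc f hf p l W hW ξ₁ y hy
end
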